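/- Let V be a real Hilbert space, let N, m be positive integers, let A be an m×N real matrix, u ∈ V^m, and 0 < τ < 2/‖AᵀA‖₂. Let x* ∈ V^N be any minimizer of F(z) := ‖z‖_{V,1} + (1/2)‖Az − u‖²_{V,2}, and let (x^k) be generated by x^{k+1} = S_τ(x^k) from any x⁰ ∈ V^N, where S_τ(z)_j := J_τ((z − τA*(Az − u))_j). Then the sequence is Fejér monotone with respect to x*: ‖x^{k+1} − x*‖_{V,2} ≤ ‖x^k − x*‖_{V,2} for every k ≥ 0. -/

import Mathlib

open scoped BigOperators
open Filter

variable {V : Type*}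

noncomputable def mnorm1 [NormedAddCommGroup V] {N : ℕ} (z : Fin N → V) : ℝ := ∑ j, ‖z j‖

noncomputable def mnorm2 [NormedAddCommGroup V] {N : ℕ} (z : Fin N → V) : ℝ :=
  Real.sqrt (∑ j, ‖z j‖ ^ 2)

def matVec [NormedAddCommGroup V] [Module ℝ V] {m N : ℕ}
    (A : Matrix (Fin m) (Fin N) ℝ) (z : Fin N → V) : Fin m → V :=
  fun i => ∑ j, A i j • z j

def matVecT [NormedAddCommGroup V] [Module ℝ V] {m N : ℕ}
    (A : Matrix (Fin m) (Fin N) ℝ) (v : Fin m → V) : Fin N → V :=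
  fun j => ∑ i, A i j • v i

def IsSparse [Zero V] {N : ℕ} (s : ℕ) (z : Fin N → V) : Prop :=
  ∃ S : Finset (Fin N), S.card ≤ s ∧ ∀ j ∉ S, z j = 0

def restrict [Zero V] {N : ℕ} (S : Finset (Fin N)) (z : Fin N → V) : Fin N → V :=
  fun j => if j ∈ S then z j else 0

noncomputable def softThresh [NormedAddCommGroup V] [Module ℝ V] (τ : ℝ) (x : V) : V :=
  (max (‖x‖ - τ) 0 / ‖x‖) • x

noncomputable def Sop [NormedAddCommGroup V] [Module ℝ V] {m N : ℕ}
    (τ : ℝ) (A : Matrix (Fin m) (Fin N) ℝ) (u : Fin m → V) (z : Fin N → V) : Fin N → V :=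
  fun j => softThresh τ ((z - τ • matVecT A (matVec A z - u)) j)

noncomputable def specNorm {N : ℕ} (M : Matrix (Fin N) (Fin N) ℝ) : ℝ :=
  ‖(Matrix.toEuclideanCLM (𝕜 := ℝ) M : EuclideanSpace ℝ (Fin N) →L[ℝ] EuclideanSpace ℝ (Fin N))‖

/-!
The minimizer `x*` is a fixed point of `S_τ`: minimality makes `-Aᵀ(Ax* - u)` a subgradient of
`‖·‖_{V,1}` at `x*`, so coordinatewise `-τ (Aᵀ(Ax* - u))_j ∈ ∂(τ‖·‖)(x*_j)`, and `J_τ` is the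
resolvent of `∂(τ‖·‖)`. The map `S_τ` is nonexpansive on `V^N`: `J_τ` is firmly nonexpansive by
monotonicity of `∂(τ‖·‖)`, and the gradient step `z ↦ z - τ AᵀA z` is nonexpansive because
`‖AᵀA z‖² ≤ ‖AᵀA‖₂ ‖A z‖²` and `τ ‖AᵀA‖₂ ≤ 2`. The Euclidean bound `‖AᵀA‖₂` carries over to
`V^N` since a positive semidefinite `P = BᵀB` gives `∑ P_jl ⟪z_j, z_l⟫ = ‖B z‖² ≥ 0`.
-/

open scoped RealInnerProductSpace
open Matrix WithLp

theorem nonneg_of_forall_mul_add_sq_nonneg {a b : ℝ}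
    (h : ∀ t : ℝ, 0 < t → t ≤ 1 → 0 ≤ t * a + t ^ 2 * b) : 0 ≤ a := by
  have hlim : Tendsto (fun t : ℝ => a + t * b) (nhdsWithin 0 (Set.Ioi 0)) (nhds a) := by
    have : Continuous (fun t : ℝ => a + t * b) := by fun_prop
    simpa using (this.tendsto 0).mono_left nhdsWithin_le_nhds
  refine ge_of_tendsto hlim ?_
  filter_upwards [Ioc_mem_nhdsGT zero_lt_one] with t ⟨ht₀, ht₁⟩
  have := h t ht₀ ht₁
  rw [show t * a + t ^ 2 * b = t * (a + t * b) by ring] at this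
  exact nonneg_of_mul_nonneg_right this ht₀

section Subgradient

variable {E : Type*} [NormedAddCommGroup E] [InnerProductSpace ℝ E]

def HasSubgradientAt (f : E → ℝ) (g x : E) : Prop :=
  ∀ y, f x + ⟪g, y - x⟫ ≤ f y

theorem HasSubgradientAt.inner_sub_nonneg {f : E → ℝ} {a b x y : E}
    (hx : HasSubgradientAt f a x) (hy : HasSubgradientAt f b y) : 0 ≤ ⟪a - b, x - y⟫ := by
  have h₁ := hx y
  have h₂ := hy x
  calc 0 ≤ -⟪a, y - x⟫ - ⟪b, x - y⟫ := by linarith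
    _ = ⟪a - b, x - y⟫ := by simp only [inner_sub_left, inner_sub_right]; ring

theorem HasSubgradientAt.const_mul {f : E → ℝ} {g x : E} (hf : HasSubgradientAt f g x)
    {c : ℝ} (hc : 0 ≤ c) : HasSubgradientAt (fun y => c * f y) (c • g) x := fun y => by
  rw [real_inner_smul_left, ← mul_add]
  exact mul_le_mul_of_nonneg_left (hf y) hc

theorem hasSubgradientAt_const_mul_norm {τ : ℝ} {a x : E} (ha : ‖a‖ ≤ τ) (hax : ⟪a, x⟫ = τ * ‖x‖) :
    HasSubgradientAt (fun y => τ * ‖y‖) a x := fun y => by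
  calc τ * ‖x‖ + ⟪a, y - x⟫ = ⟪a, y⟫ := by rw [inner_sub_right, hax]; ring
    _ ≤ ‖a‖ * ‖y‖ := real_inner_le_norm a y
    _ ≤ τ * ‖y‖ := mul_le_mul_of_nonneg_right ha (norm_nonneg y)

end Subgradient

section GradientStep

variable {E F : Type*} [NormedAddCommGroup E] [InnerProductSpace ℝ E]
  [NormedAddCommGroup F] [InnerProductSpace ℝ F]

-- Cauchy–Schwarz twice: `‖T' (T x)‖² = ⟪T x, T (T' (T x))⟫` and `‖T y‖² = ⟪T' (T y), y⟫ ≤ c ‖y‖²`.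
theorem norm_sq_adjoint_apply_le {T : E → F} {T' : F → E}
    (hadj : ∀ x y, ⟪T' y, x⟫ = ⟪y, T x⟫) {c : ℝ} (hc : 0 ≤ c)
    (hbound : ∀ x, ‖T' (T x)‖ ≤ c * ‖x‖) (x : E) : ‖T' (T x)‖ ^ 2 ≤ c * ‖T x‖ ^ 2 := by
  set y := T' (T x)
  have hTy : ‖T y‖ ^ 2 ≤ c * ‖y‖ ^ 2 := by
    rw [← real_inner_self_eq_norm_sq, ← hadj]
    calc ⟪T' (T y), y⟫ ≤ ‖T' (T y)‖ * ‖y‖ := real_inner_le_norm _ _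
      _ ≤ c * ‖y‖ * ‖y‖ := mul_le_mul_of_nonneg_right (hbound y) (norm_nonneg y)
      _ = c * ‖y‖ ^ 2 := by ring
  have hy : ‖y‖ ^ 2 ≤ ‖T x‖ * ‖T y‖ := by
    rw [← real_inner_self_eq_norm_sq]
    calc ⟪y, y⟫ = ⟪T x, T y⟫ := hadj y (T x)
      _ ≤ ‖T x‖ * ‖T y‖ := real_inner_le_norm _ _
  have h : ‖y‖ ^ 2 * ‖y‖ ^ 2 ≤ c * ‖T x‖ ^ 2 * ‖y‖ ^ 2 := by
    calc ‖y‖ ^ 2 * ‖y‖ ^ 2 ≤ (‖T x‖ * ‖T y‖) ^ 2 := by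
          rw [← sq]; exact pow_le_pow_left₀ (sq_nonneg _) hy 2
      _ = ‖T x‖ ^ 2 * ‖T y‖ ^ 2 := by ring
      _ ≤ ‖T x‖ ^ 2 * (c * ‖y‖ ^ 2) := mul_le_mul_of_nonneg_left hTy (sq_nonneg _)
      _ = c * ‖T x‖ ^ 2 * ‖y‖ ^ 2 := by ring
  rcases (sq_nonneg ‖y‖).eq_or_lt with h0 | h0
  · rw [← h0]; positivity
  · exact le_of_mul_le_mul_right h h0

theorem norm_sub_smul_adjoint_apply_le {T : E → F} {T' : F → E}
    (hadj : ∀ x y, ⟪T' y, x⟫ = ⟪y, T x⟫) {c τ : ℝ} (hc : 0 ≤ c)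
    (hbound : ∀ x, ‖T' (T x)‖ ≤ c * ‖x‖) (hτ : 0 ≤ τ) (hτc : τ * c ≤ 2) (x : E) :
    ‖x - τ • T' (T x)‖ ≤ ‖x‖ := by
  have hy := norm_sq_adjoint_apply_le hadj hc hbound x
  have hxy : ⟪x, T' (T x)⟫ = ‖T x‖ ^ 2 := by
    rw [real_inner_comm, hadj, real_inner_self_eq_norm_sq]
  have hsq : ‖x - τ • T' (T x)‖ ^ 2 ≤ ‖x‖ ^ 2 := by
    rw [norm_sub_sq_real, real_inner_smul_right, hxy, norm_smul, Real.norm_of_nonneg hτ, mul_pow]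
    nlinarith [mul_le_mul_of_nonneg_left hy (sq_nonneg τ),
      mul_le_mul_of_nonneg_right hτc (mul_nonneg hτ (sq_nonneg ‖T x‖))]
  exact (pow_le_pow_iff_left₀ (norm_nonneg _) (norm_nonneg _) two_ne_zero).mp hsq

end GradientStep

section SoftThreshold

variable [NormedAddCommGroup V] [InnerProductSpace ℝ V] {τ : ℝ}

theorem softThresh_of_norm_le {x : V} (h : ‖x‖ ≤ τ) : softThresh τ x = 0 := by
  rw [softThresh, max_eq_right (by linarith), zero_div, zero_smul]

theorem sub_softThresh_of_lt_norm (hτ : 0 ≤ τ) {x : V} (h : τ < ‖x‖) :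
    x - softThresh τ x = (τ / ‖x‖) • x := by
  have hx : ‖x‖ ≠ 0 := by linarith
  rw [softThresh, max_eq_left (by linarith), ← one_sub_div hx, sub_smul, one_smul, sub_sub_cancel]

theorem hasSubgradientAt_softThresh (hτ : 0 ≤ τ) (x : V) :
    HasSubgradientAt (fun y => τ * ‖y‖) (x - softThresh τ x) (softThresh τ x) := by
  rcases le_or_gt ‖x‖ τ with h | h
  · rw [softThresh_of_norm_le h, sub_zero]
    exact hasSubgradientAt_const_mul_norm h (by simp)
  · have hx : 0 < ‖x‖ := hτ.trans_lt h
    have hJ : softThresh τ x = (1 - τ / ‖x‖) • x := by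
      rw [sub_smul, one_smul, ← sub_softThresh_of_lt_norm hτ h, sub_sub_cancel]
    have hc : 0 ≤ 1 - τ / ‖x‖ := by rw [sub_nonneg, div_le_one hx]; exact h.le
    refine hasSubgradientAt_const_mul_norm ?_ ?_
    · rw [sub_softThresh_of_lt_norm hτ h, norm_smul, Real.norm_of_nonneg (by positivity),
        div_mul_cancel₀ _ hx.ne']
    · rw [sub_softThresh_of_lt_norm hτ h, hJ, real_inner_smul_left, real_inner_smul_right,
        real_inner_self_eq_norm_sq, norm_smul, Real.norm_of_nonneg hc]
      field_simp

theorem softThresh_eq_of_hasSubgradientAt (hτ : 0 ≤ τ) {x y : V}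
    (h : HasSubgradientAt (fun v => τ * ‖v‖) (y - x) x) : softThresh τ y = x := by
  have := (hasSubgradientAt_softThresh hτ y).inner_sub_nonneg h
  rw [sub_sub_sub_cancel_left, ← neg_sub, inner_neg_left, real_inner_self_eq_norm_sq] at this
  rw [← sub_eq_zero, ← norm_eq_zero]
  nlinarith [norm_nonneg (softThresh τ y - x)]

theorem norm_softThresh_sub_softThresh_le (hτ : 0 ≤ τ) (x y : V) :
    ‖softThresh τ x - softThresh τ y‖ ≤ ‖x - y‖ := by
  have hmono := (hasSubgradientAt_softThresh hτ x).inner_sub_nonneg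
    (hasSubgradientAt_softThresh hτ y)
  have hfirm : ‖softThresh τ x - softThresh τ y‖ ^ 2 ≤
      ⟪x - y, softThresh τ x - softThresh τ y⟫ := by
    rw [sub_sub_sub_comm, inner_sub_left, real_inner_self_eq_norm_sq] at hmono
    linarith
  nlinarith [real_inner_le_norm (x - y) (softThresh τ x - softThresh τ y),
    norm_nonneg (softThresh τ x - softThresh τ y), norm_nonneg (x - y)]

end SoftThreshold

section MixedNorm

variable [NormedAddCommGroup V] {N : ℕ}

theorem mnorm2_eq_norm_toLp (z : Fin N → V) : mnorm2 z = ‖toLp 2 z‖ := by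
  rw [mnorm2, PiLp.norm_eq_of_L2]

theorem mnorm2_le_mnorm2 {z w : Fin N → V} (h : ∀ j, ‖z j‖ ≤ ‖w j‖) : mnorm2 z ≤ mnorm2 w :=
  Real.sqrt_le_sqrt <| Finset.sum_le_sum fun j _ => pow_le_pow_left₀ (norm_nonneg _) (h j) 2

theorem mnorm1_add_smul_sub_le [NormedSpace ℝ V] {t : ℝ} (ht₀ : 0 ≤ t) (ht₁ : t ≤ 1)
    (x z : Fin N → V) :
    mnorm1 (x + t • (z - x)) ≤ mnorm1 x + t * (mnorm1 z - mnorm1 x) := by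
  have h (j : Fin N) : ‖x j + t • (z j - x j)‖ ≤ (1 - t) * ‖x j‖ + t * ‖z j‖ := by
    rw [show x j + t • (z j - x j) = (1 - t) • x j + t • z j by module]
    refine (norm_add_le _ _).trans_eq ?_
    rw [norm_smul, norm_smul, Real.norm_of_nonneg (by linarith), Real.norm_of_nonneg ht₀]
  calc mnorm1 (x + t • (z - x)) ≤ ∑ j, ((1 - t) * ‖x j‖ + t * ‖z j‖) :=
        Finset.sum_le_sum fun j _ => h j
    _ = mnorm1 x + t * (mnorm1 z - mnorm1 x) := by
      simp only [mnorm1, Finset.sum_add_distrib, ← Finset.mul_sum]; ring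

end MixedNorm

theorem specNorm_nonneg {N : ℕ} (M : Matrix (Fin N) (Fin N) ℝ) : 0 ≤ specNorm M := norm_nonneg _

section MatrixAction

variable [NormedAddCommGroup V] [InnerProductSpace ℝ V] {m N : ℕ}

theorem matVec_add (A : Matrix (Fin m) (Fin N) ℝ) (z w : Fin N → V) :
    matVec A (z + w) = matVec A z + matVec A w := by
  funext i; simp [matVec, smul_add, Finset.sum_add_distrib]

theorem matVec_sub (A : Matrix (Fin m) (Fin N) ℝ) (z w : Fin N → V) :
    matVec A (z - w) = matVec A z - matVec A w := by
  funext i; simp [matVec, smul_sub, Finset.sum_sub_distrib]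

theorem matVec_smul (A : Matrix (Fin m) (Fin N) ℝ) (t : ℝ) (z : Fin N → V) :
    matVec A (t • z) = t • matVec A z := by
  funext i; simp [matVec, Finset.smul_sum, smul_comm t]

theorem matVecT_sub (A : Matrix (Fin m) (Fin N) ℝ) (v w : Fin m → V) :
    matVecT A (v - w) = matVecT A v - matVecT A w := by
  funext j; simp [matVecT, smul_sub, Finset.sum_sub_distrib]

theorem matVecT_matVec (A : Matrix (Fin m) (Fin N) ℝ) (z : Fin N → V) :
    matVecT A (matVec A z) = matVec (Aᵀ * A) z := by
  funext j
  simp only [matVecT, matVec, mul_apply, transpose_apply, Finset.smul_sum, smul_smul,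
    Finset.sum_smul]
  exact Finset.sum_comm

theorem inner_toLp_matVecT (A : Matrix (Fin m) (Fin N) ℝ) (v : Fin m → V) (z : Fin N → V) :
    ⟪toLp 2 (matVecT A v), toLp 2 z⟫ = ⟪toLp 2 v, toLp 2 (matVec A z)⟫ := by
  simp only [PiLp.inner_apply, matVecT, matVec, sum_inner, inner_sum,
    real_inner_smul_left, real_inner_smul_right]
  exact Finset.sum_comm

theorem norm_toLp_matVec_sq (B : Matrix (Fin m) (Fin N) ℝ) (z : Fin N → V) :
    ‖toLp 2 (matVec B z)‖ ^ 2 = ∑ j, ∑ l, (Bᵀ * B) j l * ⟪z j, z l⟫ := by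
  rw [PiLp.norm_sq_eq_of_L2]
  simp only [← real_inner_self_eq_norm_sq, matVec, sum_inner, inner_sum, real_inner_smul_left,
    real_inner_smul_right, mul_apply, transpose_apply, Finset.sum_mul]
  rw [Finset.sum_comm]
  refine Finset.sum_congr rfl fun j _ => ?_
  rw [Finset.sum_comm]
  refine Finset.sum_congr rfl fun l _ => Finset.sum_congr rfl fun i _ => ?_
  rw [real_inner_comm]
  ring

theorem sum_mul_inner_nonneg_of_posSemidef {P : Matrix (Fin N) (Fin N) ℝ} (hP : P.PosSemidef)
    (z : Fin N → V) : 0 ≤ ∑ j, ∑ l, P j l * ⟪z j, z l⟫ := by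
  open scoped MatrixOrder in
  obtain ⟨B, rfl⟩ := CStarAlgebra.nonneg_iff_eq_star_mul_self.mp hP.nonneg
  rw [star_eq_conjTranspose, conjTranspose_eq_transpose_of_trivial, ← norm_toLp_matVec_sq]
  positivity

theorem posSemidef_specNorm_sq_smul_one_sub (M : Matrix (Fin N) (Fin N) ℝ) :
    (specNorm M ^ 2 • (1 : Matrix (Fin N) (Fin N) ℝ) - Mᵀ * M).PosSemidef := by
  refine .of_dotProduct_mulVec_nonneg ?_ fun x => ?_
  · simp [IsHermitian, conjTranspose_eq_transpose_of_trivial, transpose_sub, transpose_mul]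
  · have hnorm_sq (y : Fin N → ℝ) : y ⬝ᵥ y = ‖toLp 2 y‖ ^ 2 := by
      rw [← real_inner_self_eq_norm_sq, EuclideanSpace.inner_toLp_toLp, star_trivial]
    have h := (toEuclideanCLM (𝕜 := ℝ) M).le_opNorm (toLp 2 x)
    rw [toEuclideanCLM_toLp] at h
    rw [star_trivial, sub_mulVec, smul_mulVec, one_mulVec, ← mulVec_mulVec, dotProduct_sub,
      dotProduct_smul, dotProduct_mulVec, vecMul_transpose, hnorm_sq, hnorm_sq, smul_eq_mul,
      sub_nonneg, ← mul_pow]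
    exact pow_le_pow_left₀ (norm_nonneg _) h 2

theorem norm_toLp_matVec_le (M : Matrix (Fin N) (Fin N) ℝ) (z : Fin N → V) :
    ‖toLp 2 (matVec M z)‖ ≤ specNorm M * ‖toLp 2 z‖ := by
  have h := sum_mul_inner_nonneg_of_posSemidef (posSemidef_specNorm_sq_smul_one_sub M) z
  simp only [Matrix.sub_apply, Matrix.smul_apply, Matrix.one_apply, smul_eq_mul, mul_ite,
    mul_one, mul_zero, ite_mul, zero_mul, Finset.sum_ite_eq, Finset.mem_univ, if_true, sub_mul,
    Finset.sum_sub_distrib, ← norm_toLp_matVec_sq, ← Finset.mul_sum,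
    real_inner_self_eq_norm_sq] at h
  have hrhs := mul_nonneg (specNorm_nonneg M) (norm_nonneg (toLp 2 z))
  rw [← pow_le_pow_iff_left₀ (norm_nonneg _) hrhs two_ne_zero, mul_pow,
    PiLp.norm_sq_eq_of_L2 _ (toLp 2 z)]
  linarith

end MatrixAction

section ForwardBackward

variable [NormedAddCommGroup V] [InnerProductSpace ℝ V] {m N : ℕ}

theorem mnorm2_sub_smul_matVecT_matVec_le (A : Matrix (Fin m) (Fin N) ℝ) {τ : ℝ} (hτ : 0 ≤ τ)
    (hτA : τ * specNorm (Aᵀ * A) ≤ 2) (z : Fin N → V) :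
    mnorm2 (z - τ • matVecT A (matVec A z)) ≤ mnorm2 z := by
  have := norm_sub_smul_adjoint_apply_le
    (T := fun x : PiLp 2 (fun _ : Fin N => V) => toLp 2 (matVec A (ofLp x)))
    (T' := fun y => toLp 2 (matVecT A (ofLp y))) (fun x y => inner_toLp_matVecT A _ _)
    (specNorm_nonneg _) (fun x => by simpa [matVecT_matVec] using norm_toLp_matVec_le _ _)
    hτ hτA (toLp 2 z)
  simpa [mnorm2_eq_norm_toLp] using this

theorem hasSubgradientAt_mnorm1_of_isMin (A : Matrix (Fin m) (Fin N) ℝ) (u : Fin m → V)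
    (xstar : Fin N → V)
    (hmin : ∀ z : Fin N → V,
        mnorm1 xstar + (1 / 2) * mnorm2 (matVec A xstar - u) ^ 2 ≤
          mnorm1 z + (1 / 2) * mnorm2 (matVec A z - u) ^ 2) :
    HasSubgradientAt (fun z => mnorm1 (ofLp z)) (-toLp 2 (matVecT A (matVec A xstar - u)))
      (toLp 2 xstar) := by
  intro y
  obtain ⟨z, rfl⟩ : ∃ z, y = toLp 2 z := ⟨ofLp y, (toLp_ofLp 2 y).symm⟩
  set r := toLp 2 (matVec A xstar - u)
  set s := toLp 2 (matVec A (z - xstar))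
  have key (t : ℝ) (ht₀ : 0 < t) (ht₁ : t ≤ 1) :
      0 ≤ t * (mnorm1 z - mnorm1 xstar + ⟪r, s⟫) + t ^ 2 * (‖s‖ ^ 2 / 2) := by
    have hF := hmin (xstar + t • (z - xstar))
    have hconv := mnorm1_add_smul_sub_le ht₀.le ht₁ xstar z
    have hres : matVec A (xstar + t • (z - xstar)) - u =
        (matVec A xstar - u) + t • matVec A (z - xstar) := by
      rw [matVec_add, matVec_smul]; abel
    rw [hres, mnorm2_eq_norm_toLp, mnorm2_eq_norm_toLp, toLp_add, toLp_smul, norm_add_sq_real,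
      real_inner_smul_right, norm_smul, Real.norm_of_nonneg ht₀.le] at hF
    nlinarith
  have := nonneg_of_forall_mul_add_sq_nonneg key
  rw [inner_neg_left, ← toLp_sub, inner_toLp_matVecT]
  linarith

theorem HasSubgradientAt.norm_apply_of_mnorm1 {a x : PiLp 2 (fun _ : Fin N => V)}
    (h : HasSubgradientAt (fun z => mnorm1 (ofLp z)) a x) (j : Fin N) :
    HasSubgradientAt (‖·‖) (a j) (x j) := by
  classical
  intro v
  set y := Function.update (ofLp x) j v
  have hF := h (toLp 2 y)
  have hsum : ∑ i, (‖y i‖ - ‖x i‖ - ⟪a i, y i - x i⟫) = ‖v‖ - ‖x j‖ - ⟪a j, v - x j⟫ := by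
    rw [Finset.sum_eq_single j (fun i _ hi => by simp [y, Function.update_of_ne hi]) (by simp)]
    simp [y]
  simp only [mnorm1, PiLp.inner_apply, ofLp_sub, Pi.sub_apply] at hF
  simp only [Finset.sum_sub_distrib] at hsum
  show ‖x j‖ + ⟪a j, v - x j⟫ ≤ ‖v‖
  linarith

theorem Sop_eq_self_of_isMin {τ : ℝ} (hτ : 0 ≤ τ) (A : Matrix (Fin m) (Fin N) ℝ)
    (u : Fin m → V) (xstar : Fin N → V)
    (hmin : ∀ z : Fin N → V,
        mnorm1 xstar + (1 / 2) * mnorm2 (matVec A xstar - u) ^ 2 ≤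
          mnorm1 z + (1 / 2) * mnorm2 (matVec A z - u) ^ 2) :
    Sop τ A u xstar = xstar := by
  funext j
  refine softThresh_eq_of_hasSubgradientAt hτ ?_
  convert ((hasSubgradientAt_mnorm1_of_isMin A u xstar hmin).norm_apply_of_mnorm1 j).const_mul hτ
    using 1
  simp

theorem mnorm2_Sop_sub_Sop_le {τ : ℝ} (hτ : 0 ≤ τ) (A : Matrix (Fin m) (Fin N) ℝ)
    (u : Fin m → V) (z w : Fin N → V) :
    mnorm2 (Sop τ A u z - Sop τ A u w) ≤
      mnorm2 ((z - w) - τ • matVecT A (matVec A (z - w))) := by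
  have hlin : (z - τ • matVecT A (matVec A z - u)) - (w - τ • matVecT A (matVec A w - u)) =
      (z - w) - τ • matVecT A (matVec A (z - w)) := by
    have hgrad : matVecT A (matVec A z - u) - matVecT A (matVec A w - u) =
        matVecT A (matVec A (z - w)) := by
      rw [← matVecT_sub, matVec_sub, sub_sub_sub_cancel_right]
    rw [← hgrad]
    module
  refine mnorm2_le_mnorm2 fun j => ?_
  rw [← hlin]
  exact norm_softThresh_sub_softThresh_le hτ _ _

end ForwardBackward

theorem forward_backward_fejer_monotone_general
    [NormedAddCommGroup V] [InnerProductSpace ℝ V]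
    {N m : ℕ}
    (A : Matrix (Fin m) (Fin N) ℝ) (u : Fin m → V) (τ : ℝ)
    (hτ0 : 0 < τ) (hτ : τ < 2 / specNorm (A.transpose * A))
    (xstar : Fin N → V)
    (hmin : ∀ z : Fin N → V,
        mnorm1 xstar + (1 / 2) * mnorm2 (matVec A xstar - u) ^ 2 ≤
          mnorm1 z + (1 / 2) * mnorm2 (matVec A z - u) ^ 2)
    (x : ℕ → Fin N → V) (hiter : ∀ k, x (k + 1) = Sop τ A u (x k)) (k : ℕ) :
    mnorm2 (x (k + 1) - xstar) ≤ mnorm2 (x k - xstar) := by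
  have hτA : τ * specNorm (A.transpose * A) ≤ 2 := by
    rcases (specNorm_nonneg (A.transpose * A)).eq_or_lt with h | h
    · rw [← h, div_zero] at hτ
      linarith
    · exact ((lt_div_iff₀ h).mp hτ).le
  calc mnorm2 (x (k + 1) - xstar)
      = mnorm2 (Sop τ A u (x k) - Sop τ A u xstar) := by
        rw [hiter, Sop_eq_self_of_isMin hτ0.le A u xstar hmin]
    _ ≤ mnorm2 ((x k - xstar) - τ • matVecT A (matVec A (x k - xstar))) :=
        mnorm2_Sop_sub_Sop_le hτ0.le A u _ _
    _ ≤ mnorm2 (x k - xstar) := mnorm2_sub_smul_matVecT_matVec_le A hτ0.le hτA _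

/-- the forward-backward iterates are Fejér monotone with respect to any
minimizer `x*` of `F(z) = ‖z‖_{V,1} + (1/2)‖Az − u‖²_{V,2}`. -/
theorem forward_backward_fejer_monotone
    [NormedAddCommGroup V] [InnerProductSpace ℝ V] [CompleteSpace V]
    {N m : ℕ} (hN : 0 < N) (hm : 0 < m)
    (A : Matrix (Fin m) (Fin N) ℝ) (u : Fin m → V) (τ : ℝ)
    (hτ0 : 0 < τ) (hτ : τ < 2 / specNorm (A.transpose * A))
    (xstar : Fin N → V)
    (hmin : ∀ z : Fin N → V,
        mnorm1 xstar + (1 / 2) * mnorm2 (matVec A xstar - u) ^ 2 ≤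
          mnorm1 z + (1 / 2) * mnorm2 (matVec A z - u) ^ 2)
    (x : ℕ → Fin N → V) (hiter : ∀ k, x (k + 1) = Sop τ A u (x k)) (k : ℕ) :
    mnorm2 (x (k + 1) - xstar) ≤ mnorm2 (x k - xstar) :=
  forward_backward_fejer_monotone_general A u τ hτ0 hτ xstar hmin x hiter k
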